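/- Let n : ℕ and let R ⊆ FreeGroup (Fin n) be a set of relators such that the presentation ⟨Fin n; R⟩ is recursively presented, i.e., REPred (fun l : List (Fin n × Bool) => FreeGroup.mk l ∈ R). Let k : ℕ and hs : Fin k → FreeGroup (Fin n) be a finite tuple generating a subgroup H of the presented group (the image of Subgroup.closure (Set.range hs)). Then the 'yes' part of the subgroup membership problem for H is recursively enumerable: REPred (fun l : List (Fin n × Bool) => ∃ h ∈ Subgroup.closure (Set.range hs), (FreeGroup.mk l)⁻¹ * h ∈ Subgroup.normalClosure R). -/

import Mathlib

/-!
Since `normalClosure R` is normal, the words in question are exactly those representing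
elements of `closure (range hs) ⊔ normalClosure R = closure (range hs ∪ conjugatesOfSet R)`.
The generating set is recursively enumerable as a set of words, and the subgroup generated by
a recursively enumerable set of words is again recursively enumerable: a word lies in it iff
it has the same free reduction as some concatenation of generators and inverses of
generators, and such a concatenation can be searched for.
-/

namespace REPred

variable {α β : Type*} [Primcodable α] [Primcodable β]

open Nat.Partrec.Code in
theorem exists_primrecRel_monotone {p : α → Prop} (hp : REPred p) :
    ∃ T : α → ℕ → Prop, PrimrecRel T ∧ (∀ a, Monotone (T a)) ∧
      ∀ a, p a ↔ ∃ t, T a t := by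
  obtain ⟨c, hc⟩ := exists_code.1 hp
  refine ⟨fun a t => (evaln t c (Encodable.encode a)).isSome, ?_, ?_, fun a => ?_⟩
  · have : Primrec₂ fun (a : α) (t : ℕ) => evaln t c (Encodable.encode a) :=
      primrec_evaln.comp ((Primrec.snd.pair (Primrec.const c)).pair
        (Primrec.encode.comp Primrec.fst))
    exact Primrec₂.primrecRel (by simpa using Primrec.option_isSome.comp₂ this)
  · intro a s t hst h
    obtain ⟨x, hx⟩ := Option.isSome_iff_exists.1 h
    exact Option.isSome_iff_exists.2 ⟨x, evaln_mono hst hx⟩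
  · have hdom : p a ↔ (eval c (Encodable.encode a)).Dom := by
      rw [congrFun hc (Encodable.encode a)]
      simp [Part.bind, Encodable.encodek, Part.assert]
    simp only [hdom, Part.dom_iff_mem, evaln_complete, Option.isSome_iff_exists]
    exact ⟨fun ⟨x, t, h⟩ => ⟨t, x, h⟩, fun ⟨t, x, h⟩ => ⟨x, t, h⟩⟩

theorem of_exists_primrecRel {T : α → β → Prop} (hT : PrimrecRel T) :
    REPred fun a => ∃ b, T a b := by
  classical
  let test (a : α) (t : ℕ) : Bool :=
    Option.casesOn (Encodable.decode (α := β) t) false (decide <| T a ·)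
  have htest : Primrec₂ test :=
    Primrec.option_casesOn (Primrec.decode.comp Primrec.snd) (Primrec.const false)
      (hT.decide.comp (Primrec.fst.comp Primrec.fst) Primrec.snd).to₂
  refine (Partrec.rfind htest.to_comp.partrec₂).dom_re.of_eq fun a => ?_
  simp only [Nat.rfind_dom]
  constructor
  · rintro ⟨t, ht, -⟩
    cases hd : Encodable.decode (α := β) t with
    | none => simp [test, hd] at ht
    | some b => exact ⟨b, by simpa [test, hd] using ht⟩
  · rintro ⟨b, hb⟩
    exact ⟨Encodable.encode b, by simp [test, hb], fun _ => trivial⟩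

theorem comp {p : β → Prop} (hp : REPred p) {f : α → β} (hf : Primrec f) :
    REPred fun a => p (f a) := by
  obtain ⟨T, hT, -, hpT⟩ := hp.exists_primrecRel_monotone
  exact (of_exists_primrecRel (hT.comp (hf.comp Primrec.fst) Primrec.snd).primrecRel).of_eq
    fun a => (hpT (f a)).symm

theorem and {p q : α → Prop} (hp : REPred p) (hq : REPred q) : REPred fun a => p a ∧ q a := by
  obtain ⟨T, hT, -, hpT⟩ := hp.exists_primrecRel_monotone
  obtain ⟨S, hS, -, hqS⟩ := hq.exists_primrecRel_monotone
  have : PrimrecRel fun a (st : ℕ × ℕ) => T a st.1 ∧ S a st.2 :=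
    (hT.comp Primrec.fst (Primrec.fst.comp Primrec.snd)).and
      (hS.comp Primrec.fst (Primrec.snd.comp Primrec.snd))
  exact (of_exists_primrecRel this).of_eq fun a => by simp [hpT, hqS]

theorem or {p q : α → Prop} (hp : REPred p) (hq : REPred q) : REPred fun a => p a ∨ q a := by
  obtain ⟨T, hT, -, hpT⟩ := hp.exists_primrecRel_monotone
  obtain ⟨S, hS, -, hqS⟩ := hq.exists_primrecRel_monotone
  exact (of_exists_primrecRel (hT.or hS).primrecRel).of_eq fun a => by simp [hpT, hqS, exists_or]

theorem exists_snd {p : α × β → Prop} (hp : REPred p) : REPred fun a => ∃ b, p (a, b) := by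
  obtain ⟨T, hT, -, hpT⟩ := hp.exists_primrecRel_monotone
  have : PrimrecRel fun a (bt : β × ℕ) => T (a, bt.1) bt.2 :=
    hT.comp (Primrec.fst.pair (Primrec.fst.comp Primrec.snd)) (Primrec.snd.comp Primrec.snd)
  refine (of_exists_primrecRel this).of_eq fun a => ?_
  simp only [Prod.exists, hpT]

/-- Monotonicity of the stage lets a single stage witness all members of a list at once. -/
theorem forall_mem_list {p : α → Prop} (hp : REPred p) :
    REPred fun l : List α => ∀ a ∈ l, p a := by
  obtain ⟨T, hT, hTmono, hpT⟩ := hp.exists_primrecRel_monotone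
  refine (of_exists_primrecRel hT.forall_mem_list).of_eq fun l => ?_
  simp only [hpT]
  constructor
  · exact fun ⟨t, ht⟩ a ha => ⟨t, ht a ha⟩
  · intro h
    induction l with
    | nil => exact ⟨0, by simp⟩
    | cons a l ih =>
      obtain ⟨s, hs⟩ := h a List.mem_cons_self
      obtain ⟨t, ht⟩ := ih fun b hb => h b (List.mem_cons_of_mem _ hb)
      refine ⟨max s t, List.forall_mem_cons.2 ⟨hTmono a (le_max_left s t) hs, ?_⟩⟩
      exact fun b hb => hTmono b (le_max_right s t) (ht b hb)

end REPred

namespace Subgroup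

variable {G : Type*} [Group G]

theorem mem_closure_iff_exists_list {S : Set G} {g : G} :
    g ∈ closure S ↔ ∃ L : List G, (∀ x ∈ L, x ∈ S ∨ x⁻¹ ∈ S) ∧ L.prod = g := by
  constructor
  · intro hg
    rw [← SetLike.mem_coe, ← coe_toSubmonoid, closure_toSubmonoid] at hg
    obtain ⟨L, hL, rfl⟩ := Submonoid.exists_list_of_mem_closure hg
    exact ⟨L, fun x hx => (hL x hx).imp id Set.mem_inv.1, rfl⟩
  · rintro ⟨L, hL, rfl⟩
    refine list_prod_mem fun x hx => (hL x hx).elim (fun h => subset_closure h) fun h => ?_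
    exact inv_mem_iff.1 (subset_closure h)

theorem exists_mem_inv_mul_mem_iff_mem_sup (H N : Subgroup G) [N.Normal] (g : G) :
    (∃ h ∈ H, g⁻¹ * h ∈ N) ↔ g ∈ H ⊔ N := by
  rw [← SetLike.mem_coe, mul_normal, Set.mem_mul]
  constructor
  · rintro ⟨h, hH, hN⟩
    exact ⟨h, hH, h⁻¹ * g, by simpa using inv_mem hN, mul_inv_cancel_left h g⟩
  · rintro ⟨h, hH, m, hm, rfl⟩
    exact ⟨h, hH, by simpa using inv_mem hm⟩

end Subgroup

namespace FreeGroup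

variable {α : Type*}

theorem mk_eq_mk_iff_reduce_eq [DecidableEq α] {w v : List (α × Bool)} :
    mk w = mk v ↔ reduce w = reduce v :=
  ⟨reduce.sound, reduce.exact⟩

theorem mk_flatten (L : List (List (α × Bool))) : mk L.flatten = (L.map mk).prod := by
  induction L with
  | nil => rfl
  | cons w L ih => rw [List.flatten_cons, ← mul_mk, ih, List.map_cons, List.prod_cons]

variable [Primcodable α]

theorem primrec_invRev : Primrec (invRev (α := α)) :=
  Primrec.list_reverse.comp <| Primrec.list_map Primrec.id
    ((Primrec.fst.comp Primrec.snd).pair (Primrec.not.comp (Primrec.snd.comp Primrec.snd))).to₂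

theorem primrec_reduce [DecidableEq α] : Primrec (reduce (α := α)) := by
  let step (x : α × Bool) (w : List (α × Bool)) : List (α × Bool) :=
    if w.head? = some (x.1, !x.2) then w.tail else x :: w
  have hstep : Primrec₂ step := by
    refine Primrec.ite ?_ (Primrec.list_tail.comp Primrec.snd) Primrec.list_cons
    exact Primrec.eq.comp (Primrec.list_head?.comp Primrec.snd)
      (Primrec.option_some.comp ((Primrec.fst.comp Primrec.fst).pair
        (Primrec.not.comp (Primrec.snd.comp Primrec.fst))))
  have hfold (w : List (α × Bool)) : w.foldr step [] = reduce w := by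
    induction w with
    | nil => rfl
    | cons x w ih =>
      rw [List.foldr_cons, ih, reduce.cons]
      cases reduce w with
      | nil => simp [step]
      | cons y w' =>
        simp only [step, List.head?_cons, Option.some.injEq, List.tail_cons]
        refine if_congr ?_ rfl rfl
        rw [Prod.ext_iff, eq_comm, Bool.eq_not, Bool.eq_not, ne_comm]
  exact (Primrec.list_foldr Primrec.id (Primrec.const [])
    (hstep.comp (Primrec.fst.comp Primrec.snd) (Primrec.snd.comp Primrec.snd)).to₂).of_eq hfold

variable [DecidableEq α]

theorem rePred_exists_mk_eq {β : Type*} [Primcodable β] {Q : β → Prop} (hQ : REPred Q)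
    {f : β → List (α × Bool)} (hf : Primrec f) :
    REPred fun w => ∃ b, Q b ∧ mk w = mk (f b) := by
  have hred : PrimrecPred fun x : List (α × Bool) × β => reduce x.1 = reduce (f x.2) :=
    Primrec.eq.comp (primrec_reduce.comp Primrec.fst) (primrec_reduce.comp (hf.comp Primrec.snd))
  refine REPred.exists_snd ((hQ.comp Primrec.snd).and hred.computablePred.to_re) |>.of_eq
    fun w => ?_
  simp only [mk_eq_mk_iff_reduce_eq]

theorem rePred_mk_mem_range {ι : Type*} [Finite ι] [Primcodable ι] (g : ι → FreeGroup α) :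
    REPred fun w => mk w ∈ Set.range g := by
  have hrel : PrimrecPred fun x : List (α × Bool) × ι => (g x.2).toWord = reduce x.1 :=
    Primrec.eq.comp ((Primrec.dom_finite fun i => (g i).toWord).comp Primrec.snd)
      (primrec_reduce.comp Primrec.fst)
  refine (REPred.exists_snd hrel.computablePred.to_re).of_eq fun w => ?_
  simp only [Set.mem_range, ← toWord_mk, toWord_injective.eq_iff]

theorem rePred_mk_mem_conjugatesOfSet {S : Set (FreeGroup α)}
    (hS : REPred fun w => mk w ∈ S) : REPred fun w => mk w ∈ Group.conjugatesOfSet S := by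
  have hconj : Primrec fun ur : List (α × Bool) × List (α × Bool) =>
      ur.1 ++ ur.2 ++ invRev ur.1 :=
    Primrec.list_append.comp (Primrec.list_append.comp Primrec.fst Primrec.snd)
      (primrec_invRev.comp Primrec.fst)
  refine (rePred_exists_mk_eq (hS.comp Primrec.snd) hconj).of_eq fun w => ?_
  simp only [Group.mem_conjugatesOfSet_iff, isConj_iff, Prod.exists, ← mul_mk, ← inv_mk]
  constructor
  · rintro ⟨u, r, hr, h⟩
    exact ⟨mk r, hr, mk u, h.symm⟩
  · rintro ⟨a, ha, c, h⟩
    exact ⟨c.toWord, a.toWord, by simpa [mk_toWord] using ha, by simp [mk_toWord, h]⟩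

theorem rePred_mk_mem_closure {S : Set (FreeGroup α)}
    (hS : REPred fun w => mk w ∈ S) : REPred fun w => mk w ∈ Subgroup.closure S := by
  have hletter : REPred fun v : List (α × Bool) => mk v ∈ S ∨ mk (invRev v) ∈ S :=
    hS.or (hS.comp primrec_invRev)
  refine (rePred_exists_mk_eq hletter.forall_mem_list Primrec.list_flatten).of_eq fun w => ?_
  simp only [Subgroup.mem_closure_iff_exists_list, mk_flatten]
  constructor
  · rintro ⟨L, hL, h⟩
    exact ⟨L.map mk, by simpa [inv_mk] using hL, h.symm⟩
  · rintro ⟨L, hL, h⟩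
    refine ⟨L.map toWord, by simpa [← inv_mk, mk_toWord] using hL, ?_⟩
    simp [Function.comp_def, mk_toWord, h]

end FreeGroup

/-- The "yes" part of the subgroup membership problem for a finitely generated
subgroup of a recursively presented group `⟨Fin n; R⟩` is recursively enumerable. -/
theorem membership_problem_yes_part_re (n : ℕ) (R : Set (FreeGroup (Fin n)))
    (hR : REPred (fun l : List (Fin n × Bool) => FreeGroup.mk l ∈ R))
    (k : ℕ) (hs : Fin k → FreeGroup (Fin n)) :
    REPred (fun l : List (Fin n × Bool) =>
      ∃ h ∈ Subgroup.closure (Set.range hs),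
        (FreeGroup.mk l)⁻¹ * h ∈ Subgroup.normalClosure R) := by
  have hgen : REPred fun l => FreeGroup.mk l ∈ Set.range hs ∪ Group.conjugatesOfSet R :=
    (FreeGroup.rePred_mk_mem_range hs).or (FreeGroup.rePred_mk_mem_conjugatesOfSet hR)
  refine (FreeGroup.rePred_mk_mem_closure hgen).of_eq fun l => ?_
  rw [Subgroup.exists_mem_inv_mul_mem_iff_mem_sup, Subgroup.normalClosure,
    ← Subgroup.closure_union]
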